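/- Let L(n) = lcm_{mn < i ≤ ln} {f(i)} and let P(n) be the set of prime factors of L(n) that do not divide lcm(a₁b₂ − a₂b₁, q). Then log L(n) = Σ_{p ∈ P(n)} log p + O(√n) as n → ∞. -/

import Mathlib

open Filter Asymptotics

/-- `L(n) = lcm_{mn < i ≤ ln} f(i)` with `f(i) = (a₁ i + b₁)(a₂ i + b₂)`. -/
def Lfn (l m a₁ a₂ b₁ b₂ n : ℕ) : ℕ :=
  (Finset.Ioc (m * n) (l * n)).lcm (fun i => (a₁ * i + b₁) * (a₂ * i + b₂))

/-- `P(n)`: the prime factors of `L(n)` not dividing `lcm(a₁b₂ − a₂b₁, q)`. -/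
def Pfact (l m a₁ a₂ b₁ b₂ q n : ℕ) : Set ℕ :=
  {p : ℕ | p.Prime ∧ p ∣ Lfn l m a₁ a₂ b₁ b₂ n ∧
    ¬ p ∣ Nat.lcm (Int.natAbs ((a₁ : ℤ) * b₂ - (a₂ : ℤ) * b₁)) q}


/-!
If `p ∤ a₁b₂ - a₂b₁`, then `p` divides at most one of the two linear factors of each `f(i)`, so
`p ^ v_p(L(n)) ≤ M := max (a₁ln + b₁) (a₂ln + b₂)`. The primes of `P(n)` therefore contribute to
`log L(n)` at most `Σ_{p ≤ M} (⌊log_p M⌋ - 1) log p = ψ(M) - θ(M) = O(√M)` beyond their `log p`,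
while each of the boundedly many primes dividing `lcm(a₁b₂ - a₂b₁, q)` contributes
`v_p log p ≤ log f(ln) = O(log n)`.
-/

open Chebyshev Finset Real

lemma dvd_mul_sub_mul_of_dvd_of_dvd {R : Type*} [CommRing R] {d a₁ a₂ b₁ b₂ x : R}
    (h₁ : d ∣ a₁ * x + b₁) (h₂ : d ∣ a₂ * x + b₂) : d ∣ a₁ * b₂ - a₂ * b₁ := by
  have h : a₁ * b₂ - a₂ * b₁ = a₁ * (a₂ * x + b₂) - a₂ * (a₁ * x + b₁) := by ring
  exact h ▸ dvd_sub (h₂.mul_left _) (h₁.mul_left _)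

namespace Nat

lemma factorization_le_log {n : ℕ} (hn : n ≠ 0) (p : ℕ) : n.factorization p ≤ p.log n := by
  by_cases hp : p.Prime
  · exact le_log_of_pow_le hp.one_lt (le_of_dvd (pos_of_ne_zero hn) (ordProj_dvd n p))
  · simp [factorization_eq_zero_of_not_prime n hp]

lemma factorization_mul_le_log_max {p x y : ℕ} (hx : x ≠ 0) (hy : y ≠ 0)
    (h : ¬ (p ∣ x ∧ p ∣ y)) : (x * y).factorization p ≤ p.log (max x y) := by
  rw [factorization_mul hx hy, Finsupp.add_apply]
  rcases not_and_or.1 h with hpx | hpy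
  · rw [factorization_eq_zero_of_not_dvd hpx, zero_add]
    exact (factorization_le_log hy p).trans (log_mono_right (le_max_right x y))
  · rw [factorization_eq_zero_of_not_dvd hpy, add_zero]
    exact (factorization_le_log hx p).trans (log_mono_right (le_max_left x y))

lemma factorization_pos_of_mem_primeFactors {n p : ℕ} (hp : p ∈ n.primeFactors) :
    0 < n.factorization p :=
  pos_of_ne_zero (Finsupp.mem_support_iff.1 hp)

lemma le_of_mem_primeFactors_of_factorization_le_log {L N p : ℕ} (hp : p ∈ L.primeFactors)
    (h : L.factorization p ≤ p.log N) : p ≤ N :=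
  (log_pos_iff.1 ((factorization_pos_of_mem_primeFactors hp).trans_le h)).1

end Nat

lemma Finset.factorization_lcm_le {ι : Type*} {s : Finset ι} {f : ι → ℕ}
    (hf : ∀ i ∈ s, f i ≠ 0) {p k : ℕ} (h : ∀ i ∈ s, (f i).factorization p ≤ k) :
    (s.lcm f).factorization p ≤ k := by
  rw [Finset.factorization_lcm hf]
  exact Finset.sup_le h

section LogSums

variable {L : ℕ} {S : Finset ℕ}

lemma sum_factorization_mul_log_le_card_mul_log {N : ℕ} (hS : S ⊆ L.primeFactors)
    (h : ∀ p ∈ S, L.factorization p ≤ p.log N) :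
    ∑ p ∈ S, (L.factorization p : ℝ) * log p ≤ #S * log N := by
  rw [← nsmul_eq_mul]
  refine sum_le_card_nsmul _ _ _ fun p hp => ?_
  have hpN := Nat.le_of_mem_primeFactors_of_factorization_le_log (hS hp) (h p hp)
  have hp := Nat.prime_of_mem_primeFactors (hS hp)
  calc (L.factorization p : ℝ) * log p ≤ (p.log N : ℕ) * log p := by
        gcongr
        exact h p ‹_›
    _ ≤ log N := le_log_of_pow_le (by exact_mod_cast hp.pos)
        (by exact_mod_cast Nat.pow_log_le_self p (hp.pos.trans_le hpN).ne')

lemma sum_factorization_sub_one_mul_log_le_psi_sub_theta {M : ℕ} (hS : S ⊆ L.primeFactors)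
    (h : ∀ p ∈ S, L.factorization p ≤ p.log M) :
    ∑ p ∈ S, ((L.factorization p : ℝ) - 1) * log p ≤ ψ M - θ M := by
  rw [psi_eq_sum_mul_log_prime, theta_eq_sum_primesLE_log, ← sum_sub_distrib]
  have hSM : S ⊆ M.primesLE := fun p hp => Nat.mem_primesLE.2
    ⟨Nat.le_of_mem_primeFactors_of_factorization_le_log (hS hp) (h p hp),
      Nat.prime_of_mem_primeFactors (hS hp)⟩
  calc ∑ p ∈ S, ((L.factorization p : ℝ) - 1) * log p
      ≤ ∑ p ∈ S, ((p.log M : ℝ) * log p - log p) := by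
        gcongr with p hp
        rw [sub_one_mul]
        gcongr
        exact h p hp
    _ ≤ ∑ p ∈ M.primesLE, ((p.log M : ℝ) * log p - log p) := by
        refine sum_le_sum_of_subset_of_nonneg hSM fun p hp _ => ?_
        obtain ⟨hpM, hp⟩ := Nat.mem_primesLE.1 hp
        have : (1 : ℝ) ≤ p.log M := by exact_mod_cast Nat.log_pos_iff.2 ⟨hpM, hp.one_lt⟩
        nlinarith [log_natCast_nonneg p]

end LogSums

lemma abs_log_sub_sum_log_primeFactors_le {L D M : ℕ} (hD : D ≠ 0)
    (hnd : ∀ p ∈ L.primeFactors, ¬ p ∣ D → L.factorization p ≤ p.log M)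
    (hall : ∀ p ∈ L.primeFactors, L.factorization p ≤ p.log (M ^ 2)) :
    |log L - ∑ p ∈ L.primeFactors with ¬ p ∣ D, log p|
      ≤ #D.primeFactors * log ((M ^ 2 : ℕ) : ℝ) + (ψ M - θ M) := by
  have hsplit : log L - ∑ p ∈ L.primeFactors with ¬ p ∣ D, log p
      = ∑ p ∈ L.primeFactors with p ∣ D, (L.factorization p : ℝ) * log p
        + ∑ p ∈ L.primeFactors with ¬ p ∣ D, ((L.factorization p : ℝ) - 1) * log p := by
    rw [log_nat_eq_sum_factorization, Finsupp.sum, Nat.support_factorization,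
      ← sum_filter_add_sum_filter_not _ (· ∣ D)]
    simp only [sub_one_mul, sum_sub_distrib]
    ring
  have hone : ∀ p ∈ L.primeFactors, (1 : ℝ) ≤ L.factorization p := fun p hp => by
    exact_mod_cast Nat.factorization_pos_of_mem_primeFactors hp
  have hcard : #{p ∈ L.primeFactors | p ∣ D} ≤ #D.primeFactors := card_le_card fun p hp => by
    obtain ⟨hpL, hpD⟩ := mem_filter.1 hp
    exact Nat.mem_primeFactors.2 ⟨Nat.prime_of_mem_primeFactors hpL, hpD, hD⟩
  rw [hsplit, abs_of_nonneg]
  · gcongr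
    · calc _ ≤ (#{p ∈ L.primeFactors | p ∣ D} : ℝ) * log ((M ^ 2 : ℕ) : ℝ) :=
            sum_factorization_mul_log_le_card_mul_log (filter_subset _ _)
              fun p hp => hall p (mem_filter.1 hp).1
        _ ≤ _ := by gcongr
    · exact sum_factorization_sub_one_mul_log_le_psi_sub_theta (filter_subset _ _)
        fun p hp => hnd p (mem_filter.1 hp).1 (mem_filter.1 hp).2
  · refine add_nonneg (sum_nonneg fun p hp => ?_) (sum_nonneg fun p hp => ?_) <;>
    · have := hone p (mem_filter.1 hp).1
      nlinarith [log_natCast_nonneg p]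

lemma log_sq_le_four_mul_sqrt {x : ℝ} (hx : 0 ≤ x) : log (x ^ 2) ≤ 4 * √x := by
  have h := log_le_self (sqrt_nonneg x)
  rw [log_sqrt hx] at h
  rw [log_pow]
  push_cast
  linarith

section Lfn

variable {l m a₁ a₂ b₁ b₂ n : ℕ}

lemma factor_ne_zero_of_mem_Ioc (ha₁ : 0 < a₁) (ha₂ : 0 < a₂) {i : ℕ}
    (hi : i ∈ Ioc (m * n) (l * n)) : (a₁ * i + b₁) * (a₂ * i + b₂) ≠ 0 := by
  have : 0 < i := (Nat.zero_le _).trans_lt (mem_Ioc.1 hi).1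
  positivity

lemma Lfn_ne_zero (ha₁ : 0 < a₁) (ha₂ : 0 < a₂) : Lfn l m a₁ a₂ b₁ b₂ n ≠ 0 := by
  rw [Lfn, Ne, Finset.lcm_eq_zero_iff]
  rintro ⟨i, hi, h⟩
  exact factor_ne_zero_of_mem_Ioc ha₁ ha₂ hi h

lemma factorization_Lfn_le_log_sq (ha₁ : 0 < a₁) (ha₂ : 0 < a₂) (p : ℕ) :
    (Lfn l m a₁ a₂ b₁ b₂ n).factorization p
      ≤ p.log (max (a₁ * (l * n) + b₁) (a₂ * (l * n) + b₂) ^ 2) := by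
  refine factorization_lcm_le (fun i hi => factor_ne_zero_of_mem_Ioc ha₁ ha₂ hi) fun i hi => ?_
  have hi_le : i ≤ l * n := (mem_Ioc.1 hi).2
  refine (Nat.factorization_le_log (factor_ne_zero_of_mem_Ioc ha₁ ha₂ hi) p).trans
    (Nat.log_mono_right ?_)
  rw [sq]
  exact Nat.mul_le_mul (le_max_of_le_left (by gcongr)) (le_max_of_le_right (by gcongr))

lemma factorization_Lfn_le_log_of_not_dvd (ha₁ : 0 < a₁) (ha₂ : 0 < a₂) {p : ℕ}
    (hp : ¬ p ∣ Int.natAbs ((a₁ : ℤ) * b₂ - (a₂ : ℤ) * b₁)) :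
    (Lfn l m a₁ a₂ b₁ b₂ n).factorization p
      ≤ p.log (max (a₁ * (l * n) + b₁) (a₂ * (l * n) + b₂)) := by
  refine factorization_lcm_le (fun i hi => factor_ne_zero_of_mem_Ioc ha₁ ha₂ hi) fun i hi => ?_
  have hi_le : i ≤ l * n := (mem_Ioc.1 hi).2
  have hboth : ¬ (p ∣ a₁ * i + b₁ ∧ p ∣ a₂ * i + b₂) := fun ⟨h₁, h₂⟩ => hp <| Int.natCast_dvd.1 <|
    dvd_mul_sub_mul_of_dvd_of_dvd (x := (i : ℤ)) (by exact_mod_cast h₁) (by exact_mod_cast h₂)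
  have hne := factor_ne_zero_of_mem_Ioc (b₁ := b₁) (b₂ := b₂) ha₁ ha₂ hi
  exact (Nat.factorization_mul_le_log_max (left_ne_zero_of_mul hne) (right_ne_zero_of_mul hne)
    hboth).trans (Nat.log_mono_right (max_le_max (by gcongr) (by gcongr)))

lemma finsum_mem_Pfact_eq_sum (ha₁ : 0 < a₁) (ha₂ : 0 < a₂) (q : ℕ) (g : ℕ → ℝ) :
    ∑ᶠ p ∈ Pfact l m a₁ a₂ b₁ b₂ q n, g p
      = ∑ p ∈ (Lfn l m a₁ a₂ b₁ b₂ n).primeFactors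
          with ¬ p ∣ Nat.lcm (Int.natAbs ((a₁ : ℤ) * b₂ - (a₂ : ℤ) * b₁)) q, g p := by
  rw [← finsum_mem_coe_finset]
  congr
  ext p
  simp [Pfact, Nat.mem_primeFactors, Lfn_ne_zero ha₁ ha₂, and_assoc]

end Lfn

theorem log_lcm_eq_sum_log_primes_bigO_general (l m : ℕ)
    (a₁ a₂ b₁ b₂ : ℕ) (ha₁ : 0 < a₁) (ha₂ : 0 < a₂) (hne : a₁ * b₂ ≠ a₂ * b₁)
    (q : ℕ) (hq : q = Nat.lcm a₁ a₂) :
    (fun n : ℕ =>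
        Real.log (Lfn l m a₁ a₂ b₁ b₂ n)
          - ∑ᶠ p ∈ Pfact l m a₁ a₂ b₁ b₂ q n, Real.log p)
      =O[atTop] (fun n : ℕ => Real.sqrt n) := by
  set D := Nat.lcm (Int.natAbs ((a₁ : ℤ) * b₂ - (a₂ : ℤ) * b₁)) q
  have hD : D ≠ 0 := by
    refine Nat.lcm_ne_zero ?_ (hq ▸ Nat.lcm_ne_zero ha₁.ne' ha₂.ne')
    rw [Int.natAbs_ne_zero, sub_ne_zero]
    exact_mod_cast hne
  obtain ⟨C, hC⟩ := psi_sub_theta_le_mul_sqrt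
  set c := max (a₁ * l + b₁) (a₂ * l + b₂)
  refine IsBigO.of_bound ((4 * #D.primeFactors + max C 0) * √c) ?_
  filter_upwards [eventually_ge_atTop 1] with n hn
  set M := max (a₁ * (l * n) + b₁) (a₂ * (l * n) + b₂)
  have hMc : M ≤ c * n :=
    max_le ((by nlinarith : a₁ * (l * n) + b₁ ≤ (a₁ * l + b₁) * n).trans (by gcongr; omega))
      ((by nlinarith : a₂ * (l * n) + b₂ ≤ (a₂ * l + b₂) * n).trans (by gcongr; omega))
  have hbound := abs_log_sub_sum_log_primeFactors_le (L := Lfn l m a₁ a₂ b₁ b₂ n) (M := M) hD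
    (fun p _ hpD => factorization_Lfn_le_log_of_not_dvd ha₁ ha₂ fun h =>
      hpD (h.trans (Nat.dvd_lcm_left _ _)))
    (fun p _ => factorization_Lfn_le_log_sq ha₁ ha₂ p)
  rw [finsum_mem_Pfact_eq_sum ha₁ ha₂, norm_eq_abs, norm_of_nonneg (sqrt_nonneg _)]
  calc _ ≤ _ := hbound
    _ ≤ #D.primeFactors * (4 * √M) + max C 0 * √M := by
      gcongr
      · push_cast
        exact log_sq_le_four_mul_sqrt (Nat.cast_nonneg M)
      · exact (hC M).trans (by gcongr; exact le_max_left _ _)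
    _ = (4 * #D.primeFactors + max C 0) * √M := by ring
    _ ≤ (4 * #D.primeFactors + max C 0) * (√c * √n) := by
      gcongr
      rw [← sqrt_mul (Nat.cast_nonneg _)]
      exact sqrt_le_sqrt (by exact_mod_cast hMc)
    _ = _ := by ring

theorem log_lcm_eq_sum_log_primes_bigO (l m : ℕ) (hlm : m < l)
    (a₁ a₂ b₁ b₂ : ℕ) (ha₁ : 0 < a₁) (ha₂ : 0 < a₂) (hb₁ : 0 < b₁) (hb₂ : 0 < b₂)
    (hcop₁ : Nat.gcd a₁ b₁ = 1) (hcop₂ : Nat.gcd a₂ b₂ = 1) (hne : a₁ * b₂ ≠ a₂ * b₁)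
    (q : ℕ) (hq : q = Nat.lcm a₁ a₂) :
    (fun n : ℕ =>
        Real.log (Lfn l m a₁ a₂ b₁ b₂ n)
          - ∑ᶠ p ∈ Pfact l m a₁ a₂ b₁ b₂ q n, Real.log p)
      =O[atTop] (fun n : ℕ => Real.sqrt n) :=
  log_lcm_eq_sum_log_primes_bigO_general l m a₁ a₂ b₁ b₂ ha₁ ha₂ hne q hq
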